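/- Let A be a 4-dimensional real vector space, let J : A → A be a linear map with J∘J = −id, let ω be a real alternating 2-form on A satisfying ω(Jv, Jw) = ω(v,w) for all v,w ∈ A and ω(v, Jv) > 0 for all v ≠ 0, and let Ω : A × A → ℂ be a nonzero ℝ-bilinear alternating map satisfying Ω(Jv, w) = i·Ω(v,w) for all v,w ∈ A. On the direct sum A ⊕ ℝ³, let g¹, g², g³ denote the pullbacks to A ⊕ ℝ³ of the standard dual basis of ℝ³, and let ω, Re Ω, Im Ω also denote the pullbacks to A ⊕ ℝ³ of the corresponding alternating 2-forms on A. Define the real alternating 3-form φ' = g¹∧g²∧g³ + g¹∧ω − g²∧(Re Ω) + g³∧(Im Ω) on A ⊕ ℝ³. Then there exists a real linear equivalence u : ℝ⁷ ≃ A ⊕ ℝ³ such that φ'(u v₁, u v₂, u v₃) = φ₀(v₁, v₂, v₃) for all v₁, v₂, v₃ ∈ ℝ⁷ (i.e. φ' is a G₂ 3-form). -/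

import Mathlib

/-!
Through `J`, `A` is a complex plane `ℂ²` on which `ω(·, J ·) + i ω` is a hermitian metric and
`Ω` is a nonzero complex volume form. Gram–Schmidt gives a unitary basis `(e, e')`, and a phase
rotation of `e'` makes `Ω(e, e') = -m` a negative real; in the real frame `(e, Je, e', Je')`
the forms `ω`, `Re Ω`, `Im Ω` then have the standard coefficients, up to the factors `1` and `m`.
Scaling `A` by `μ⁻¹` and `ℝ³` by `(μ², μ⁻¹, μ⁻¹)` with `μ³ = m` makes every term of `φ'`
standard, so `φ'` pulls back to `φ₀`.
-/

open Matrix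

/-- The alternating 3-form `θ^{ijk}` on `ℝ⁷` (indices 0-based). -/
noncomputable def theta (i j k : Fin 7) (v₁ v₂ v₃ : Fin 7 → ℝ) : ℝ :=
  Matrix.det !![v₁ i, v₂ i, v₃ i; v₁ j, v₂ j, v₃ j; v₁ k, v₂ k, v₃ k]

/-- The standard G₂ 3-form `φ₀ = θ^{123}+θ^{145}+θ^{167}+θ^{246}−θ^{257}−θ^{347}−θ^{356}`. -/
noncomputable def phi0 (v₁ v₂ v₃ : Fin 7 → ℝ) : ℝ :=
  theta 0 1 2 v₁ v₂ v₃ + theta 0 3 4 v₁ v₂ v₃ + theta 0 5 6 v₁ v₂ v₃ +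
    theta 1 3 5 v₁ v₂ v₃ - theta 1 4 6 v₁ v₂ v₃ - theta 2 3 6 v₁ v₂ v₃ -
    theta 2 4 5 v₁ v₂ v₃

open Complex ComplexConjugate

section SU2Structure

variable {A : Type*} [AddCommGroup A] [Module ℝ A] {J : A →ₗ[ℝ] A}
  {ω : A →ₗ[ℝ] A →ₗ[ℝ] ℝ} {Ω : A →ₗ[ℝ] A →ₗ[ℝ] ℂ}

theorem omega_J_left (hJ : ∀ v, J (J v) = -v) (hω_J : ∀ v w, ω (J v) (J w) = ω v w) (v w : A) :
    ω (J v) w = -ω v (J w) := by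
  rw [← hω_J v (J w), hJ, map_neg, neg_neg]

theorem omega_J_comm (hJ : ∀ v, J (J v) = -v) (hω_alt : ω.IsAlt)
    (hω_J : ∀ v w, ω (J v) (J w) = ω v w) (v w : A) : ω v (J w) = ω w (J v) := by
  rw [← hω_alt.neg, omega_J_left hJ hω_J, neg_neg]

theorem Omega_J_right (hΩ_alt : Ω.IsAlt) (hΩ_J : ∀ v w, Ω (J v) w = I * Ω v w) (v w : A) :
    Ω v (J w) = I * Ω v w := by
  rw [← hΩ_alt.neg, hΩ_J, ← hΩ_alt.neg, mul_neg, neg_neg]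

theorem Omega_re_smul_add_im_smul_J (hΩ_alt : Ω.IsAlt) (hΩ_J : ∀ v w, Ω (J v) w = I * Ω v w)
    (z : ℂ) (v w : A) : Ω v (z.re • w + z.im • J w) = z * Ω v w := by
  rw [map_add, map_smul, map_smul, Omega_J_right hΩ_alt hΩ_J, Complex.real_smul,
    Complex.real_smul]
  conv_rhs => rw [← Complex.re_add_im z]
  ring

theorem omega_frame_expansion (hJ : ∀ v, J (J v) = -v) (hω_alt : ω.IsAlt)
    (hω_J : ∀ v w, ω (J v) (J w) = ω v w) {e e' : A} (h₁ : ω e e' = 0) (h₂ : ω e (J e') = 0)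
    (a₁ a₂ a₃ a₄ b₁ b₂ b₃ b₄ : ℝ) :
    ω (a₁ • e + a₂ • J e + a₃ • e' + a₄ • J e') (b₁ • e + b₂ • J e + b₃ • e' + b₄ • J e') =
      (a₁ * b₂ - a₂ * b₁) * ω e (J e) + (a₃ * b₄ - a₄ * b₃) * ω e' (J e') := by
  simp only [map_add, map_smul, LinearMap.add_apply, LinearMap.smul_apply, smul_eq_mul,
    omega_J_left hJ hω_J, hJ, map_neg, hω_alt e, hω_alt e', ← hω_alt.neg e e',
    omega_J_comm hJ hω_alt hω_J e' e, h₁, h₂]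
  ring

theorem Omega_frame_expansion (hΩ_alt : Ω.IsAlt) (hΩ_J : ∀ v w, Ω (J v) w = I * Ω v w)
    (e e' : A) (a₁ a₂ a₃ a₄ b₁ b₂ b₃ b₄ : ℝ) :
    Ω (a₁ • e + a₂ • J e + a₃ • e' + a₄ • J e') (b₁ • e + b₂ • J e + b₃ • e' + b₄ • J e') =
      ((a₁ + a₂ * I) * (b₃ + b₄ * I) - (a₃ + a₄ * I) * (b₁ + b₂ * I)) * Ω e e' := by
  simp only [map_add, map_smul, LinearMap.add_apply, LinearMap.smul_apply, Complex.real_smul,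
    hΩ_J, Omega_J_right hΩ_alt hΩ_J, hΩ_alt e, hΩ_alt e', ← hΩ_alt.neg e e']
  ring

theorem exists_smul_omega_J_eq_one (hω_pos : ∀ v, v ≠ 0 → 0 < ω v (J v)) {v : A} (hv : v ≠ 0) :
    ∃ s : ℝ, 0 < s ∧ ω (s • v) (J (s • v)) = 1 := by
  have hp := hω_pos v hv
  refine ⟨(√(ω v (J v)))⁻¹, by positivity, ?_⟩
  simp only [map_smul, LinearMap.smul_apply, smul_eq_mul]
  field_simp
  rw [Real.sq_sqrt hp.le]

theorem exists_omega_orthogonal (hJ : ∀ v, J (J v) = -v) (hω_alt : ω.IsAlt)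
    (hω_J : ∀ v w, ω (J v) (J w) = ω v w) (hΩ_alt : Ω.IsAlt)
    (hΩ_J : ∀ v w, Ω (J v) w = I * Ω v w) {e : A} (he : ω e (J e) = 1) (w : A) :
    ∃ w' : A, ω e w' = 0 ∧ ω e (J w') = 0 ∧ Ω e w' = Ω e w := by
  -- Gram–Schmidt against `e, J e` for the metric `ω(·, J ·)`
  refine ⟨w - ω w (J e) • e + ω w e • J e, ?_, ?_, ?_⟩
  · simp only [map_add, map_sub, map_smul, smul_eq_mul, hω_alt e, he]
    linarith [hω_alt.neg e w]
  · simp only [map_add, map_sub, map_smul, smul_eq_mul, hJ, map_neg, hω_alt e, he]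
    linarith [omega_J_comm hJ hω_alt hω_J e w]
  · simp [Omega_J_right hΩ_alt hΩ_J, hΩ_alt e]

theorem exists_unitary_frame (hJ : ∀ v, J (J v) = -v) (hω_alt : ω.IsAlt)
    (hω_J : ∀ v w, ω (J v) (J w) = ω v w) (hω_pos : ∀ v, v ≠ 0 → 0 < ω v (J v))
    (hΩ_alt : Ω.IsAlt) (hΩ_ne : Ω ≠ 0) (hΩ_J : ∀ v w, Ω (J v) w = I * Ω v w) :
    ∃ e e' : A, ω e (J e) = 1 ∧ ω e' (J e') = 1 ∧ ω e e' = 0 ∧ ω e (J e') = 0 ∧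
      ∃ m : ℝ, 0 < m ∧ Ω e e' = -m := by
  obtain ⟨v, w, hvw⟩ : ∃ v w, Ω v w ≠ 0 := by
    by_contra! h
    exact hΩ_ne (LinearMap.ext₂ fun v w => by simp [h])
  have hv : v ≠ 0 := by rintro rfl; simp at hvw
  obtain ⟨s, hs, he⟩ := exists_smul_omega_J_eq_one hω_pos hv
  set c := Ω (s • v) w
  have hc : c ≠ 0 := by simp [c, hs.ne', hvw]
  -- multiplying `w` by the phase `-conj c` turns `Ω (s • v) w` into `-|c|²`
  obtain ⟨w', hw'₁, hw'₂, hw'₃⟩ := exists_omega_orthogonal hJ hω_alt hω_J hΩ_alt hΩ_J he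
    ((-conj c).re • w + (-conj c).im • J w)
  rw [Omega_re_smul_add_im_smul_J hΩ_alt hΩ_J, neg_mul, ← Complex.normSq_eq_conj_mul_self]
    at hw'₃
  have hw' : w' ≠ 0 := by
    rintro rfl
    simp only [map_zero, zero_eq_neg, Complex.ofReal_eq_zero, map_eq_zero] at hw'₃
    exact hc hw'₃
  obtain ⟨s', hs', he'⟩ := exists_smul_omega_J_eq_one hω_pos hw'
  refine ⟨s • v, s' • w', he, he', by rw [map_smul (ω (s • v)), hw'₁, smul_zero],
    by rw [map_smul J, map_smul (ω (s • v)), hw'₂, smul_zero], s' * normSq c,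
    mul_pos hs' (Complex.normSq_pos.mpr hc), ?_⟩
  rw [map_smul (Ω (s • v)), hw'₃, Complex.real_smul]
  push_cast
  ring

theorem linearIndependent_unitaryFrame (hJ : ∀ v, J (J v) = -v) (hω_alt : ω.IsAlt)
    (hω_J : ∀ v w, ω (J v) (J w) = ω v w) {e e' : A} (he : ω e (J e) = 1)
    (he' : ω e' (J e') = 1) (h₁ : ω e e' = 0) (h₂ : ω e (J e') = 0) :
    LinearIndependent ℝ ![e, J e, e', J e'] := by
  rw [Fintype.linearIndependent_iff]
  intro a ha
  simp only [Fin.sum_univ_four, Matrix.cons_val] at ha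
  have key b₁ b₂ b₃ b₄ :=
    omega_frame_expansion hJ hω_alt hω_J h₁ h₂ (a 0) (a 1) (a 2) (a 3) b₁ b₂ b₃ b₄
  simp only [ha, map_zero, LinearMap.zero_apply, he, he'] at key
  intro i
  fin_cases i <;> simp only [Fin.zero_eta, Fin.mk_one, Fin.reduceFinMk] <;>
    linarith [key 0 1 0 0, key 1 0 0 0, key 0 0 0 1, key 0 0 1 0]

end SU2Structure

section G2Frame

variable {A : Type*} [AddCommGroup A] [Module ℝ A]

/-- The 3-form `φ' = g¹∧g²∧g³ + g¹∧ω − g²∧Re Ω + g³∧Im Ω` on `A × ℝ³`. -/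
noncomputable def su2G2Form (ω : A →ₗ[ℝ] A →ₗ[ℝ] ℝ) (Ω : A →ₗ[ℝ] A →ₗ[ℝ] ℂ)
    (x y z : A × (Fin 3 → ℝ)) : ℝ :=
  Matrix.det !![x.2 0, y.2 0, z.2 0; x.2 1, y.2 1, z.2 1; x.2 2, y.2 2, z.2 2]
    + (x.2 0 * ω y.1 z.1 - y.2 0 * ω x.1 z.1 + z.2 0 * ω x.1 y.1)
    - (x.2 1 * (Ω y.1 z.1).re - y.2 1 * (Ω x.1 z.1).re + z.2 1 * (Ω x.1 y.1).re)
    + (x.2 2 * (Ω y.1 z.1).im - y.2 2 * (Ω x.1 z.1).im + z.2 2 * (Ω x.1 y.1).im)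

noncomputable def g2Frame (J : A →ₗ[ℝ] A) (μ : ℝ) (e e' : A) : Fin 7 → A × (Fin 3 → ℝ) :=
  ![(0, ![μ ^ 2, 0, 0]), (0, ![0, μ⁻¹, 0]), (0, ![0, 0, μ⁻¹]),
    (μ⁻¹ • e, 0), (μ⁻¹ • J e, 0), (μ⁻¹ • e', 0), (μ⁻¹ • J e', 0)]

variable {J : A →ₗ[ℝ] A} {ω : A →ₗ[ℝ] A →ₗ[ℝ] ℝ} {Ω : A →ₗ[ℝ] A →ₗ[ℝ] ℂ} {μ : ℝ} {e e' : A}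

theorem sum_smul_g2Frame (x : Fin 7 → ℝ) :
    ∑ i, x i • g2Frame J μ e e' i =
      ((μ⁻¹ * x 3) • e + (μ⁻¹ * x 4) • J e + (μ⁻¹ * x 5) • e' + (μ⁻¹ * x 6) • J e',
        ![μ ^ 2 * x 0, μ⁻¹ * x 1, μ⁻¹ * x 2]) := by
  simp only [g2Frame, Fin.sum_univ_seven]
  ext i
  · simp [smul_smul, mul_comm]
  · fin_cases i <;> simp [mul_comm]

theorem linearIndependent_g2Frame (hμ : μ ≠ 0) (hli : LinearIndependent ℝ ![e, J e, e', J e']) :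
    LinearIndependent ℝ (g2Frame J μ e e') := by
  rw [Fintype.linearIndependent_iff]
  intro x hx
  rw [sum_smul_g2Frame, Prod.mk_eq_zero] at hx
  obtain ⟨hA, hR⟩ := hx
  have hA' := Fintype.linearIndependent_iff.mp hli ![μ⁻¹ * x 3, μ⁻¹ * x 4, μ⁻¹ * x 5, μ⁻¹ * x 6]
    (by simpa [Fin.sum_univ_four] using hA)
  simp_all [Fin.forall_fin_succ, funext_iff]

theorem su2G2Form_g2Frame (hJ : ∀ v, J (J v) = -v) (hω_alt : ω.IsAlt)
    (hω_J : ∀ v w, ω (J v) (J w) = ω v w) (hΩ_alt : Ω.IsAlt)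
    (hΩ_J : ∀ v w, Ω (J v) w = I * Ω v w) {m : ℝ} (hμ : μ ≠ 0) (hm : μ ^ 3 = m)
    (he : ω e (J e) = 1) (he' : ω e' (J e') = 1) (h₁ : ω e e' = 0) (h₂ : ω e (J e') = 0)
    (hΩe : Ω e e' = -m) (v₁ v₂ v₃ : Fin 7 → ℝ) :
    su2G2Form ω Ω (∑ i, v₁ i • g2Frame J μ e e' i) (∑ i, v₂ i • g2Frame J μ e e' i)
      (∑ i, v₃ i • g2Frame J μ e e' i) = phi0 v₁ v₂ v₃ := by
  simp only [su2G2Form, phi0, theta, sum_smul_g2Frame, omega_frame_expansion hJ hω_alt hω_J h₁ h₂,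
    Omega_frame_expansion hΩ_alt hΩ_J, he, he', hΩe, det_fin_three, of_apply, cons_val', cons_val,
    cons_val_zero, cons_val_one, cons_val_fin_one, mul_re, mul_im, add_re, add_im, sub_re, sub_im,
    neg_re, neg_im, ofReal_re, ofReal_im, I_re, I_im]
  subst hm
  field_simp
  ring

end G2Frame

/-- The 3-form `φ' = g¹∧g²∧g³ + g¹∧ω − g²∧Re Ω + g³∧Im Ω` on `A ⊕ ℝ³` associated to an
`SU(2)`-structure `(J, ω, Ω)` on `A` is a G₂ 3-form: there is a linear equivalence
`u : ℝ⁷ ≃ A ⊕ ℝ³` with `φ' ∘ u = φ₀`. -/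
theorem statement5
    (A : Type*) [AddCommGroup A] [Module ℝ A] [FiniteDimensional ℝ A]
    (hdim : Module.finrank ℝ A = 4)
    (J : A →ₗ[ℝ] A) (hJ : J ∘ₗ J = -LinearMap.id)
    (ω : A →ₗ[ℝ] A →ₗ[ℝ] ℝ)
    (hω_alt : ∀ v, ω v v = 0)
    (hω_J : ∀ v w, ω (J v) (J w) = ω v w)
    (hω_pos : ∀ v : A, v ≠ 0 → 0 < ω v (J v))
    (Ω : A →ₗ[ℝ] A →ₗ[ℝ] ℂ)
    (hΩ_alt : ∀ v, Ω v v = 0)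
    (hΩ_ne : Ω ≠ 0)
    (hΩ_J : ∀ v w, Ω (J v) w = Complex.I * Ω v w) :
    ∃ u : (Fin 7 → ℝ) ≃ₗ[ℝ] (A × (Fin 3 → ℝ)),
      ∀ v₁ v₂ v₃ : Fin 7 → ℝ,
        -- g¹∧g²∧g³
        (Matrix.det !![(u v₁).2 0, (u v₂).2 0, (u v₃).2 0;
                       (u v₁).2 1, (u v₂).2 1, (u v₃).2 1;
                       (u v₁).2 2, (u v₂).2 2, (u v₃).2 2]
        -- g¹∧ω
        + ((u v₁).2 0 * ω (u v₂).1 (u v₃).1 - (u v₂).2 0 * ω (u v₁).1 (u v₃).1 +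
            (u v₃).2 0 * ω (u v₁).1 (u v₂).1)
        -- − g²∧Re Ω
        - ((u v₁).2 1 * (Ω (u v₂).1 (u v₃).1).re - (u v₂).2 1 * (Ω (u v₁).1 (u v₃).1).re +
            (u v₃).2 1 * (Ω (u v₁).1 (u v₂).1).re)
        -- + g³∧Im Ω
        + ((u v₁).2 2 * (Ω (u v₂).1 (u v₃).1).im - (u v₂).2 2 * (Ω (u v₁).1 (u v₃).1).im +
            (u v₃).2 2 * (Ω (u v₁).1 (u v₂).1).im))
        = phi0 v₁ v₂ v₃ := by
  have hJJ : ∀ v, J (J v) = -v := fun v => by simpa using LinearMap.congr_fun hJ v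
  obtain ⟨e, e', he, he', h₁, h₂, m, hm, hΩe⟩ :=
    exists_unitary_frame hJJ hω_alt hω_J hω_pos hΩ_alt hΩ_ne hΩ_J
  obtain ⟨μ, hμ, hμm⟩ : ∃ μ : ℝ, 0 < μ ∧ μ ^ 3 = m :=
    ⟨m ^ ((3 : ℕ) : ℝ)⁻¹, by positivity, Real.rpow_inv_natCast_pow hm.le three_ne_zero⟩
  have hli := linearIndependent_g2Frame hμ.ne'
    (linearIndependent_unitaryFrame hJJ hω_alt hω_J he he' h₁ h₂)
  have hcard : Fintype.card (Fin 7) = Module.finrank ℝ (A × (Fin 3 → ℝ)) := by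
    simp [Module.finrank_prod, hdim]
  refine ⟨(basisOfLinearIndependentOfCardEqFinrank hli hcard).equivFun.symm, fun v₁ v₂ v₃ => ?_⟩
  simp only [Module.Basis.equivFun_symm_apply, coe_basisOfLinearIndependentOfCardEqFinrank]
  exact su2G2Form_g2Frame hJJ hω_alt hω_J hΩ_alt hΩ_J hμ.ne' hμm he he' h₁ h₂ hΩe v₁ v₂ v₃
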